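/- Let α be an ordinal, let τ be a Hausdorff shift-continuous topology on the α-bicyclic monoid B_α, and let (a,b) ∈ B_α with a and b nonzero, with Cantor normal forms a = a₁ω^{n₁}+⋯+a_mω^{n_m} and b = b₁ω^{k₁}+⋯+b_tω^{k_t}. Define h_{(a,b)} : B_α → B_α by h_{(a,b)}(x,y) = (a₁ω^{n₁}+⋯+(a_m−1)ω^{n_m}, 0)·(x,y)·(0, b₁ω^{k₁}+⋯+(b_t−1)ω^{k_t}). Then the restriction of h_{(a,b)} to the set A = {(x,y) : x < ω^{n_m}, y < ω^{k_t}} ∪ {(ω^{n_m}, ω^{k_t})} is a homeomorphism of A onto the set B = {(a₁ω^{n₁}+⋯+(a_m−1)ω^{n_m}+γ, b₁ω^{k₁}+⋯+(b_t−1)ω^{k_t}+δ) : γ < ω^{n_m} and δ < ω^{k_t}} ∪ {(a,b)}, where both A and B carry the subspace topology inherited from τ. -/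

import Mathlib

open Ordinal Set Topology

noncomputable section

/-- The `α`-bicyclic monoid: pairs of ordinals below `ω ^ α`. -/
def Bicyclic (α : Ordinal) : Type 1 :=
  {p : Ordinal × Ordinal // p.1 < ω ^ α ∧ p.2 < ω ^ α}

namespace Bicyclic

variable {α : Ordinal}

def mk (a b : Ordinal) (ha : a < ω ^ α) (hb : b < ω ^ α) : Bicyclic α :=
  ⟨(a, b), ha, hb⟩

instance : Mul (Bicyclic α) :=
  ⟨fun x y =>
    if x.val.2 ≤ y.val.1 then
      ⟨(x.val.1 + (y.val.1 - x.val.2), y.val.2),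
        (principal_add_omega0_opow α) x.2.1
          (lt_of_le_of_lt (Ordinal.sub_le_self _ _) y.2.1),
        y.2.2⟩
    else
      ⟨(x.val.1, y.val.2 + (x.val.2 - y.val.1)),
        x.2.1,
        (principal_add_omega0_opow α) y.2.2
          (lt_of_le_of_lt (Ordinal.sub_le_self _ _) x.2.2)⟩⟩

instance : One (Bicyclic α) :=
  ⟨⟨(0, 0), opow_pos α omega0_pos, opow_pos α omega0_pos⟩⟩

end Bicyclic

/-- The Bruck extension of a semigroup `S`. -/
def Bruck (S : Type*) : Type _ := ℕ × S × ℕ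

def Bruck.mk {S : Type*} (n : ℕ) (s : S) (m : ℕ) : Bruck S := (n, s, m)

instance {S : Type*} [Mul S] : Mul (Bruck S) :=
  ⟨fun x y =>
    if x.2.2 < y.1 then (x.1 + y.1 - x.2.2, y.2.1, y.2.2)
    else if y.1 < x.2.2 then (x.1, x.2.1, y.2.2 + x.2.2 - y.1)
    else (x.1, x.2.1 * y.2.1, y.2.2)⟩

/-- The Bruck extension of `S` with an adjoined (absorbing) zero `0*`. -/
abbrev BruckZero (S : Type*) := WithZero (Bruck S)

/-- The box `[n,m]` in the Bruck extension with zero. -/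
def box (S : Type*) (n m : ℕ) : Set (BruckZero S) :=
  {x | ∃ s : S, x = ↑(Bruck.mk n s m)}

/-- A topology on `X` is shift-continuous if all two-sided shifts `x ↦ a * x * b`
are continuous. -/
def ShiftContinuous (X : Type*) [Mul X] [TopologicalSpace X] : Prop :=
  ∀ a b : X, Continuous fun x => a * x * b

/-! In coordinates the shift `(a',0)·_·(0,b')` is the translation `(x, y) ↦ (a' + x, b' + y)`,
and the shift `(0,a')·_·(b',0)` is `(x, y) ↦ (x - a', y - b')` on pairs above `(a', b')`.
Since `a' + x - a' = x` for ordinals, the second is a left inverse of the first; both are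
continuous by shift-continuity, so the translation is a topological embedding, and it maps `A`
onto `B`. -/

namespace Bicyclic

variable {α : Ordinal}

@[simp]
lemma val_mk (a b : Ordinal) (ha : a < ω ^ α) (hb : b < ω ^ α) : (mk a b ha hb).val = (a, b) :=
  rfl

lemma val_mul (x y : Bicyclic α) :
    (x * y).val = if x.val.2 ≤ y.val.1
      then (x.val.1 + (y.val.1 - x.val.2), y.val.2)
      else (x.val.1, y.val.2 + (x.val.2 - y.val.1)) :=
  apply_ite Subtype.val _ _ _

lemma val_mk_zero_mul (a : Ordinal) (ha : a < ω ^ α) (h₀ : 0 < ω ^ α) (z : Bicyclic α) :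
    (mk a 0 ha h₀ * z).val = (a + z.val.1, z.val.2) := by
  rw [val_mul]
  simp [Ordinal.sub_zero]

lemma val_mul_zero_mk (b : Ordinal) (hb : b < ω ^ α) (h₀ : 0 < ω ^ α) (z : Bicyclic α) :
    (z * mk 0 b h₀ hb).val = (z.val.1, b + z.val.2) := by
  rw [val_mul]
  rcases eq_zero_or_pos z.val.2 with hz | hz
  · simp [hz]
  · simp [hz.ne', Ordinal.sub_zero]

lemma val_zero_mk_mul {a : Ordinal} (ha : a < ω ^ α) (h₀ : 0 < ω ^ α) {z : Bicyclic α}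
    (h : a ≤ z.val.1) : (mk 0 a h₀ ha * z).val = (z.val.1 - a, z.val.2) := by
  rw [val_mul]
  simp [h]

lemma val_mul_mk_zero {b : Ordinal} (hb : b < ω ^ α) (h₀ : 0 < ω ^ α) {z : Bicyclic α}
    (h : b ≤ z.val.2) : (z * mk b 0 hb h₀).val = (z.val.1, z.val.2 - b) := by
  rw [val_mul]
  rcases h.eq_or_lt with rfl | hlt
  · simp [Ordinal.sub_self]
  · simp [hlt.not_ge]

def shiftAdd (a b : Ordinal) (ha : a < ω ^ α) (hb : b < ω ^ α) (z : Bicyclic α) : Bicyclic α :=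
  mk a 0 ha (opow_pos α omega0_pos) * z * mk 0 b (opow_pos α omega0_pos) hb

def shiftSub (a b : Ordinal) (ha : a < ω ^ α) (hb : b < ω ^ α) (z : Bicyclic α) : Bicyclic α :=
  mk 0 a (opow_pos α omega0_pos) ha * z * mk b 0 hb (opow_pos α omega0_pos)

section Shift

variable {a b : Ordinal} (ha : a < ω ^ α) (hb : b < ω ^ α)

lemma val_shiftAdd (z : Bicyclic α) :
    (shiftAdd a b ha hb z).val = (a + z.val.1, b + z.val.2) := by
  rw [shiftAdd, val_mul_zero_mk, val_mk_zero_mul]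

lemma val_shiftSub {z : Bicyclic α} (h₁ : a ≤ z.val.1) (h₂ : b ≤ z.val.2) :
    (shiftSub a b ha hb z).val = (z.val.1 - a, z.val.2 - b) := by
  rw [shiftSub, val_mul_mk_zero _ _ (by rwa [val_zero_mk_mul _ _ h₁]), val_zero_mk_mul _ _ h₁]

lemma leftInverse_shiftSub_shiftAdd :
    Function.LeftInverse (shiftSub a b ha hb) (shiftAdd a b ha hb) := fun z => by
  have hz := val_shiftAdd ha hb z
  apply Subtype.ext
  rw [val_shiftSub _ _ (by rw [hz]; exact le_self_add) (by rw [hz]; exact le_self_add), hz,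
    Ordinal.add_sub_cancel, Ordinal.add_sub_cancel]

lemma isEmbedding_shiftAdd [TopologicalSpace (Bicyclic α)] (hτ : ShiftContinuous (Bicyclic α)) :
    IsEmbedding (shiftAdd a b ha hb) :=
  (leftInverse_shiftSub_shiftAdd ha hb).isEmbedding (hτ _ _) (hτ _ _)

lemma image_shiftAdd_box_union_corner {e f : Ordinal} {x : Bicyclic α}
    (hx₁ : x.val.1 = a + ω ^ e) (hx₂ : x.val.2 = b + ω ^ f) :
    shiftAdd a b ha hb '' {y | (y.val.1 < ω ^ e ∧ y.val.2 < ω ^ f) ∨ y.val = (ω ^ e, ω ^ f)} =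
      {y | (∃ γ δ : Ordinal, γ < ω ^ e ∧ δ < ω ^ f ∧ y.val = (a + γ, b + δ)) ∨ y = x} := by
  ext z
  constructor
  · rintro ⟨w, ⟨hw₁, hw₂⟩ | hw, rfl⟩
    · exact Or.inl ⟨_, _, hw₁, hw₂, val_shiftAdd ha hb w⟩
    · exact Or.inr (Subtype.ext (by rw [val_shiftAdd, hw, ← hx₁, ← hx₂]))
  · have lt_of_val_eq {γ δ : Ordinal} (hp : z.val = (a + γ, b + δ)) :
        γ < ω ^ α ∧ δ < ω ^ α :=
      ⟨le_add_self.trans_lt (hp ▸ z.2.1), le_add_self.trans_lt (hp ▸ z.2.2)⟩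
    rintro (⟨γ, δ, hγ, hδ, hz⟩ | rfl)
    · exact ⟨mk γ δ (lt_of_val_eq hz).1 (lt_of_val_eq hz).2, Or.inl ⟨hγ, hδ⟩,
        Subtype.ext (by rw [val_shiftAdd, val_mk, hz])⟩
    · have hz : z.val = (a + ω ^ e, b + ω ^ f) := by rw [← hx₁, ← hx₂]
      exact ⟨mk (ω ^ e) (ω ^ f) (lt_of_val_eq hz).1 (lt_of_val_eq hz).2, Or.inr rfl,
        Subtype.ext (by rw [val_shiftAdd, val_mk, hz])⟩

end Shift

end Bicyclic

theorem restriction_homeomorphism_general (α : Ordinal) [TopologicalSpace (Bicyclic α)]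
    (hτ : ShiftContinuous (Bicyclic α)) (x : Bicyclic α) (e f a' b' : Ordinal)
    (haeq : x.val.1 = a' + ω ^ e) (hbeq : x.val.2 = b' + ω ^ f)
    (ha' : a' < ω ^ α) (hb' : b' < ω ^ α) :
    ∃ H : ({y : Bicyclic α | (y.val.1 < ω ^ e ∧ y.val.2 < ω ^ f) ∨
              y.val = (ω ^ e, ω ^ f)} : Set (Bicyclic α)) ≃ₜ
          ({y : Bicyclic α | (∃ γ δ : Ordinal, γ < ω ^ e ∧ δ < ω ^ f ∧
              y.val = (a' + γ, b' + δ)) ∨ y = x} : Set (Bicyclic α)),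
      ∀ z, (H z : Bicyclic α) =
        Bicyclic.mk a' 0 ha' (opow_pos α omega0_pos) * (z : Bicyclic α) *
          Bicyclic.mk 0 b' (opow_pos α omega0_pos) hb' := by
  have hAB := Bicyclic.image_shiftAdd_box_union_corner ha' hb' haeq hbeq
  rw [image_eq_range] at hAB
  exact ⟨((Bicyclic.isEmbedding_shiftAdd ha' hb' hτ).comp .subtypeVal).toHomeomorph.trans
    (.setCongr hAB), fun _ => rfl⟩

/-- With the notation of Statement 1 (Cantor normal forms of `a` and `b`
encoded by `a = a' + ω^e`, `ω^e ∣ a'`, `b = b' + ω^f`, `ω^f ∣ b'`), the map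
`h_{(a,b)} : (x,y) ↦ (a',0)·(x,y)·(0,b')` restricts to a homeomorphism from
`A = {(x,y) : x < ω^e, y < ω^f} ∪ {(ω^e, ω^f)}` onto
`B = {(a'+γ, b'+δ) : γ < ω^e, δ < ω^f} ∪ {(a,b)}`, both carrying the subspace
topology. -/
theorem restriction_homeomorphism (α : Ordinal) [TopologicalSpace (Bicyclic α)]
    [T2Space (Bicyclic α)] (hτ : ShiftContinuous (Bicyclic α))
    (x : Bicyclic α) (ha : x.val.1 ≠ 0) (hb : x.val.2 ≠ 0)
    (e f a' b' : Ordinal)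
    (hamul : ∃ q, a' = ω ^ e * q) (haeq : x.val.1 = a' + ω ^ e)
    (hbmul : ∃ q, b' = ω ^ f * q) (hbeq : x.val.2 = b' + ω ^ f)
    (ha' : a' < ω ^ α) (hb' : b' < ω ^ α) :
    ∃ H : ({y : Bicyclic α | (y.val.1 < ω ^ e ∧ y.val.2 < ω ^ f) ∨
              y.val = (ω ^ e, ω ^ f)} : Set (Bicyclic α)) ≃ₜ
          ({y : Bicyclic α | (∃ γ δ : Ordinal, γ < ω ^ e ∧ δ < ω ^ f ∧
              y.val = (a' + γ, b' + δ)) ∨ y = x} : Set (Bicyclic α)),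
      ∀ z, (H z : Bicyclic α) =
        Bicyclic.mk a' 0 ha' (opow_pos α omega0_pos) * (z : Bicyclic α) *
          Bicyclic.mk 0 b' (opow_pos α omega0_pos) hb' :=
  restriction_homeomorphism_general α hτ x e f a' b' haeq hbeq ha' hb'
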